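/- For every integer N ≥ 3, every N×N real symmetric positive semidefinite matrix X with all diagonal entries equal to 1 satisfies Σ_{i=1}^{N−1} X_{i,i+1} − X_{N,1} ≤ N·cos(π/N). -/

import Mathlib

/-- Entry of a matrix indexed by naturals (0 outside the range). -/
noncomputable def entry {N : ℕ} (X : Matrix (Fin N) (Fin N) ℝ) (i j : ℕ) : ℝ :=
  if h : i < N ∧ j < N then X ⟨i, h.1⟩ ⟨j, h.2⟩ else 0

/-- The N-cycle objective Σ_{i=1}^{N−1} X_{i,i+1} − X_{N,1} (0-indexed). -/
noncomputable def cycObj (N : ℕ) (X : Matrix (Fin N) (Fin N) ℝ) : ℝ :=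
  (∑ i ∈ Finset.range (N - 1), entry X i (i + 1)) - entry X (N - 1) 0

/-!
Let `P` be the negacyclic shift (`P j (j+1) = 1`, `P (N-1) 0 = -1`), so that `cycObj N X` is the
pairing `∑ X j l * P j l`. Its eigenvectors are the plane waves `exp (i θₖ j)` with the odd angles
`θₖ = (2k+1)π/N`, whence the spectral decomposition
`N (cos (π/N) • 1 - (P + Pᵀ)/2) = ∑ₖ (cos (π/N) - cos θₖ) (uₖ uₖᵀ + vₖ vₖᵀ)`,
`uₖ j = cos (θₖ j)`, `vₖ j = sin (θₖ j)`. Every coefficient is nonnegative, so pairing with the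
positive semidefinite `X`, whose trace is `N`, gives `N (N cos (π/N) - cycObj N X) ≥ 0`.
-/

open Real Finset

noncomputable def oddAngle (N k : ℕ) : ℝ := (2 * k + 1) * π / N

lemma sum_cos_oddAngle_mul_eq_zero {N : ℕ} {m : ℤ} (hm : ¬ (N : ℤ) ∣ m) :
    ∑ k ∈ range N, cos (oddAngle N k * m) = 0 := by
  rcases N.eq_zero_or_pos with rfl | hN
  · simp
  have hN' : (N : ℝ) ≠ 0 := by positivity
  have hsin : sin (π * m / N) ≠ 0 := by
    rw [Ne, sin_eq_zero_iff]
    rintro ⟨q, hq⟩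
    refine hm ⟨q, ?_⟩
    field_simp at hq
    exact_mod_cast (by linarith : (m : ℝ) = N * q)
  have h := sin_mul_sum_cos N (2 * π * m / N) (π * m / N)
  rw [show (N : ℝ) * (2 * π * m / N) / 2 = m * π by field_simp, sin_int_mul_pi, zero_mul,
    show 2 * π * m / N / 2 = π * m / N by ring] at h
  rw [← (mul_eq_zero.mp h).resolve_left hsin]
  refine sum_congr rfl fun k _ => congrArg cos ?_
  simp only [oddAngle]; ring

lemma sum_cos_oddAngle_mul_natCast_mul (N : ℕ) (q : ℤ) :
    ∑ k ∈ range N, cos (oddAngle N k * (N * q)) = N * cos (q * π) := by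
  rcases N.eq_zero_or_pos with rfl | hN
  · simp
  have hN' : (N : ℝ) ≠ 0 := by positivity
  have h : ∀ k : ℕ, cos (oddAngle N k * (N * q)) = cos (q * π) := fun k => by
    rw [show oddAngle N k * (N * q) = q * π + ((k * q : ℤ) : ℝ) * (2 * π) by
      simp only [oddAngle]; push_cast; field_simp; ring, cos_add_int_mul_two_pi]
  simp [h]

lemma cos_oddAngle_le {N k : ℕ} (hk : k < N) : cos (oddAngle N k) ≤ cos (π / N) := by
  have hN : (0 : ℝ) < N := by exact_mod_cast (k.zero_le.trans_lt hk)
  have hk' : (k : ℝ) + 1 ≤ N := by exact_mod_cast hk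
  rw [← sub_nonneg, cos_sub_cos, show (π / N + oddAngle N k) / 2 = (k + 1) * π / N by
      simp only [oddAngle]; ring,
    show (π / N - oddAngle N k) / 2 = -(k * π / N) by simp only [oddAngle]; ring, sin_neg]
  have h1 : 0 ≤ sin ((k + 1) * π / N) := sin_nonneg_of_nonneg_of_le_pi (by positivity)
    (by rw [div_le_iff₀ hN]; nlinarith [pi_pos])
  have h2 : 0 ≤ sin (k * π / N) := sin_nonneg_of_nonneg_of_le_pi (by positivity)
    (by rw [div_le_iff₀ hN]; nlinarith [pi_pos])
  nlinarith

lemma sum_cos_oddAngle_mul_of_abs_le {N : ℕ} {m : ℤ} (hm : |m| ≤ N) :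
    ∑ k ∈ range N, cos (oddAngle N k * m) =
      if m = 0 then (N : ℝ) else if |m| = N then -(N : ℝ) else 0 := by
  have hC (q : ℤ) := sum_cos_oddAngle_mul_natCast_mul N q
  split_ifs with h0 hmN
  · simp [h0]
  · rcases abs_eq (Int.natCast_nonneg N) |>.mp hmN with rfl | rfl
    · simpa using hC 1
    · simpa using hC (-1)
  · refine sum_cos_oddAngle_mul_eq_zero ?_
    rintro ⟨q, rfl⟩
    rw [abs_mul, Nat.abs_cast] at hm hmN
    have hN0 : 0 < (N : ℤ) := lt_of_le_of_ne (by positivity) (by rintro h; simp [← h] at h0)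
    have : |q| ≤ 1 := le_of_mul_le_mul_left (by linarith) hN0
    obtain ⟨hq₁, hq₂⟩ := abs_le.mp this
    interval_cases q <;> simp_all

noncomputable def negacyclicShift (N j l : ℕ) : ℝ :=
  (if l = j + 1 then 1 else 0) - (if j + 1 = N ∧ l = 0 then 1 else 0)

lemma sum_sub_cos_oddAngle_mul_cos {N j l : ℕ} (hN : 3 ≤ N) (hj : j < N) (hl : l < N) :
    ∑ k ∈ range N,
        (cos (π / N) - cos (oddAngle N k)) * cos (oddAngle N k * ((l - j : ℤ) : ℝ))
      = N * cos (π / N) * (if l = j then 1 else 0)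
        - N / 2 * (negacyclicShift N j l + negacyclicShift N l j) := by
  have expand (θ : ℝ) (d : ℤ) : (cos (π / N) - cos θ) * cos (θ * d) =
      cos (π / N) * cos (θ * d) - (cos (θ * (d + 1 : ℤ)) + cos (θ * (d - 1 : ℤ))) / 2 := by
    push_cast
    rw [mul_add, mul_sub, mul_one, cos_add, cos_sub]
    ring
  simp only [expand, sum_sub_distrib, ← mul_sum, ← sum_div, sum_add_distrib]
  rw [sum_cos_oddAngle_mul_of_abs_le (by rw [abs_le]; omega),
    sum_cos_oddAngle_mul_of_abs_le (by rw [abs_le]; omega),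
    sum_cos_oddAngle_mul_of_abs_le (by rw [abs_le]; omega)]
  simp only [negacyclicShift, abs_eq (Int.natCast_nonneg N)]
  -- `3 ≤ N` keeps the diagonal, the two off-diagonals and the two corners apart.
  obtain h | h | h | h | h | h : l = j ∨ l = j + 1 ∨ j = l + 1 ∨ (j = 0 ∧ l = N - 1) ∨
      (l = 0 ∧ j = N - 1) ∨
      (l ≠ j ∧ l ≠ j + 1 ∧ j ≠ l + 1 ∧ ¬(j = 0 ∧ l = N - 1) ∧ ¬(l = 0 ∧ j = N - 1)) := by
    omega
  all_goals simp (disch := omega) only [if_pos, if_neg]; ring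

lemma entry_comm {N : ℕ} {X : Matrix (Fin N) (Fin N) ℝ} (hX : X.IsSymm) (i j : ℕ) :
    entry X i j = entry X j i := by
  unfold entry
  by_cases h : i < N ∧ j < N
  · rw [dif_pos h, dif_pos h.symm]
    exact hX.apply _ _
  · rw [dif_neg h, dif_neg (mt And.symm h)]

lemma sum_range_entry_self {N : ℕ} {X : Matrix (Fin N) (Fin N) ℝ} (hX : ∀ i, X i i = 1) :
    ∑ j ∈ range N, entry X j j = N := by
  rw [← Fin.sum_univ_eq_sum_range (fun j => entry X j j)]
  simp [entry, hX]

lemma sum_sum_entry_mul_mul_nonneg {N : ℕ} {X : Matrix (Fin N) (Fin N) ℝ} (hX : X.PosSemidef)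
    (f : ℕ → ℝ) : 0 ≤ ∑ j ∈ range N, ∑ l ∈ range N, entry X j l * (f j * f l) := by
  have h := hX.dotProduct_mulVec_nonneg (fun i : Fin N => f i)
  simp only [dotProduct, Matrix.mulVec, star_trivial, mul_sum] at h
  refine h.trans_eq ?_
  simp only [Finset.sum_range]
  refine sum_congr rfl fun j _ => sum_congr rfl fun l _ => ?_
  simp only [entry, Fin.is_lt, and_self, ↓reduceDIte, Fin.eta]
  ring

/-- `w* X w` for the plane wave `w j = exp (i θ j)`. -/
noncomputable def fourierEnergy {N : ℕ} (X : Matrix (Fin N) (Fin N) ℝ) (θ : ℝ) : ℝ :=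
  ∑ j ∈ range N, ∑ l ∈ range N, entry X j l * cos (θ * ((l - j : ℤ) : ℝ))

lemma fourierEnergy_nonneg {N : ℕ} {X : Matrix (Fin N) (Fin N) ℝ} (hX : X.PosSemidef)
    (θ : ℝ) : 0 ≤ fourierEnergy X θ := by
  have h := add_nonneg (sum_sum_entry_mul_mul_nonneg hX fun j => cos (θ * j))
    (sum_sum_entry_mul_mul_nonneg hX fun j => sin (θ * j))
  simp only [← sum_add_distrib, ← mul_add] at h
  refine h.trans_eq (sum_congr rfl fun j _ => sum_congr rfl fun l _ => ?_)
  rw [Int.cast_sub, Int.cast_natCast, Int.cast_natCast, mul_sub, cos_sub]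
  ring

lemma sum_sum_entry_mul_negacyclicShift {N : ℕ} (X : Matrix (Fin N) (Fin N) ℝ) :
    ∑ j ∈ range N, ∑ l ∈ range N, entry X j l * negacyclicShift N j l = cycObj N X := by
  cases N with
  | zero => simp [cycObj, entry]
  | succ n =>
    have row (j : ℕ) : ∑ l ∈ range (n + 1), entry X j l * negacyclicShift (n + 1) j l =
        (if j < n then entry X j (j + 1) else 0) - (if j = n then entry X j 0 else 0) := by
      simp [negacyclicShift, mul_sub, sum_sub_distrib, ite_and]
    simp only [row, sum_sub_distrib, sum_ite_eq', mem_range, sum_range_succ, lt_irrefl,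
      if_false, add_zero, lt_add_one, if_true, cycObj, add_tsub_cancel_right]
    rw [sum_congr rfl fun j hj => if_pos (mem_range.mp hj)]

lemma sum_mul_fourierEnergy_oddAngle {N : ℕ} (hN : 3 ≤ N) {X : Matrix (Fin N) (Fin N) ℝ}
    (hX : X.IsSymm) (hdiag : ∀ i, X i i = 1) :
    ∑ k ∈ range N, (cos (π / N) - cos (oddAngle N k)) * fourierEnergy X (oddAngle N k)
      = N * (N * cos (π / N) - cycObj N X) := by
  have hshift_swap : ∑ j ∈ range N, ∑ l ∈ range N, entry X j l * negacyclicShift N l j =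
      cycObj N X := by
    rw [sum_comm, ← sum_sum_entry_mul_negacyclicShift X]
    simp only [entry_comm hX]
  simp only [fourierEnergy, mul_sum]
  rw [sum_comm]
  refine (sum_congr rfl fun j _ => sum_comm).trans ?_
  calc _ = ∑ j ∈ range N, ∑ l ∈ range N,
          (N * cos (π / N) * (entry X j l * if l = j then 1 else 0)
            - N / 2 * (entry X j l * negacyclicShift N j l)
            - N / 2 * (entry X j l * negacyclicShift N l j)) := by
        refine sum_congr rfl fun j hj => sum_congr rfl fun l hl => ?_
        simp only [mul_left_comm _ (entry X j l), ← mul_sum]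
        rw [sum_sub_cos_oddAngle_mul_cos hN (mem_range.1 hj) (mem_range.1 hl)]
        ring
    _ = N * cos (π / N) * ∑ j ∈ range N, entry X j j
          - N / 2 * cycObj N X - N / 2 * cycObj N X := by
        simp only [sum_sub_distrib, ← mul_sum, sum_sum_entry_mul_negacyclicShift, hshift_swap,
          mul_ite, mul_one, mul_zero, sum_ite_eq', sum_ite_mem, inter_self]
    _ = _ := by rw [sum_range_entry_self hdiag]; ring

theorem cycle_sdp_bound (N : ℕ) (hN : 3 ≤ N) (X : Matrix (Fin N) (Fin N) ℝ)
    (hX : X.PosSemidef) (hdiag : ∀ i, X i i = 1) :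
    cycObj N X ≤ (N : ℝ) * Real.cos (Real.pi / N) := by
  have hnonneg : 0 ≤ ∑ k ∈ range N, (cos (π / N) - cos (oddAngle N k)) *
      fourierEnergy X (oddAngle N k) :=
    sum_nonneg fun k hk => mul_nonneg (sub_nonneg.2 (cos_oddAngle_le (mem_range.1 hk)))
      (fourierEnergy_nonneg hX _)
  rw [sum_mul_fourierEnergy_oddAngle hN (Matrix.isHermitian_iff_isSymm.1 hX.isHermitian) hdiag]
    at hnonneg
  exact sub_nonneg.1 (nonneg_of_mul_nonneg_right hnonneg (by positivity))
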